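/- arXiv:2107.00550 — 5 statements merged into one kernel-verified Lean document; each statement's English description precedes it below -/
import Mathlib

section
/- Suppose V is a good homogeneous ssee. Then for every hereditary property P of [0,1]-decorations of V, the sequence ex(V_n, P_n)/|V_n| is non-decreasing in n (with values in ℝ_{≥0} ∪ {∞}); in particular this sequence either converges to a limit π(P) or tends to infinity as n → ∞. -/
open MeasureTheory Filter Set

noncomputable section

/-- A set-sequence equipped with embeddings (ssee): a sequence of finite nonempty
sets `V n` together with, for `N ≤ n`, a collection of injections `V N → V n`. -/
structure Ssee where
  V : ℕ → Type
  fin : ∀ n, Fintype (V n)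
  dec : ∀ n, DecidableEq (V n)
  nonemp : ∀ n, Nonempty (V n)
  emb : (N n : ℕ) → Finset (V N → V n)
  emb_inj : ∀ N n, N ≤ n → ∀ φ ∈ emb N n, Function.Injective φ

attribute [instance] Ssee.fin Ssee.dec Ssee.nonemp

/-- `I(N,n)`: the number of pairs of embeddings whose images intersect in exactly `i`
elements, summed over all `i` with `1 < i < |V_N|`. -/
def Ssee.interCount (S : Ssee) (N n : ℕ) : ℕ :=
  ((S.emb N n ×ˢ S.emb N n).filter (fun p =>
    1 < ((Finset.univ.image p.1) ∩ (Finset.univ.image p.2)).card ∧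
    ((Finset.univ.image p.1) ∩ (Finset.univ.image p.2)).card < Fintype.card (S.V N))).card

/-- A ssee is good if `|V_n| → ∞`, and for every `N` with `|V_N| > 1` we have
`|emb N n| / |V_n| → ∞` and `|V_n| · I(N,n) / |emb N n|² → 0`. -/
def Ssee.Good (S : Ssee) : Prop :=
  Tendsto (fun n => Fintype.card (S.V n)) atTop atTop ∧
  (∀ N, 1 < Fintype.card (S.V N) →
    Tendsto (fun n => ((S.emb N n).card : ℝ) / (Fintype.card (S.V n) : ℝ)) atTop atTop) ∧
  (∀ N, 1 < Fintype.card (S.V N) →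
    Tendsto (fun n => ((Fintype.card (S.V n) : ℝ) * (S.interCount N n : ℝ)) /
      ((S.emb N n).card : ℝ) ^ 2) atTop (nhds 0))

/-- Homogeneous: every point of `V n` lies in the same strictly positive number of
images of embeddings of `V N`. -/
def Ssee.Homogeneous (S : Ssee) : Prop :=
  ∀ N n, N ≤ n → ∃ k : ℕ, 0 < k ∧ ∀ x : S.V n,
    ((S.emb N n).filter (fun φ => x ∈ Finset.univ.image φ)).card = k

/-- The unit cube `[0,1]^ι`. -/
def unitCube (ι : Type) : Set (ι → ℝ) := Set.univ.pi fun _ => Set.Icc (0:ℝ) 1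

/-- A box in `[0,1]^ι`: a product of measurable subsets of `[0,1]`. -/
def IsBox {ι : Type} (b : Set (ι → ℝ)) : Prop :=
  ∃ A : ι → Set ℝ, (∀ i, MeasurableSet (A i) ∧ A i ⊆ Set.Icc 0 1) ∧ b = Set.univ.pi A

/-- A simple box: a product of finite unions of intervals (i.e. of order-connected
subsets of `ℝ`) contained in `[0,1]`. -/
def IsSimpleBox {ι : Type} (b : Set (ι → ℝ)) : Prop :=
  ∃ A : ι → Set ℝ,
    (∀ i, A i ⊆ Set.Icc 0 1 ∧
      ∃ s : Finset (Set ℝ), (∀ J ∈ s, J.OrdConnected) ∧ A i = ⋃₀ ↑s) ∧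
    b = Set.univ.pi A

/-- The projection `b_{↓φ}` of a body `b ⊆ [0,1]^β` along `φ : α → β`: those `c` whose
fiber (in the coordinates outside the range of `φ`) has positive measure. -/
def projBody {α β : Type} [Fintype α] [Fintype β] (φ : α → β) (b : Set (β → ℝ)) :
    Set (α → ℝ) :=
  letI : ∀ p : Prop, Decidable p := fun p => Classical.propDecidable p
  {c | 0 < volume {d : {i : β // i ∉ Set.range φ} → ℝ |
    (fun i : β => if h : i ∈ Set.range φ then c h.choose else d ⟨i, h⟩) ∈ b}}

/-- The lift `b_{↑φ}` of a body `b ⊆ [0,1]^α` along `φ : α → β`. -/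
def liftBody {α β : Type} (φ : α → β) (b : Set (α → ℝ)) : Set (β → ℝ) :=
  {c | c ∈ unitCube β ∧ (fun j => c (φ j)) ∈ b}

/-- The upper shadow `∂⁺_{V_n}(b)` of a body `b ⊆ [0,1]^{V_N}`. -/
def Ssee.upperShadow (S : Ssee) (N n : ℕ) (b : Set (S.V N → ℝ)) : Set (S.V n → ℝ) :=
  ⋃ φ ∈ S.emb N n, liftBody φ b

/-- A hereditary `[0,1]`-decoration property: a sequence of measurable subsets of the
unit cubes whose complements (within the cubes) are closed under upper shadows. -/
def Ssee.Hereditary (S : Ssee) (P : ∀ n, Set (S.V n → ℝ)) : Prop :=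
  (∀ n, MeasurableSet (P n) ∧ P n ⊆ unitCube (S.V n)) ∧
  ∀ N n, N ≤ n → S.upperShadow N n (unitCube (S.V N) \ P N) ⊆ unitCube (S.V n) \ P n

/-- Expectation of `f φ` over an embedding `φ` chosen uniformly from `emb N n`. -/
def Ssee.expProj (S : Ssee) (N n : ℕ) (f : (S.V N → S.V n) → ℝ) : ℝ :=
  (∑ φ ∈ S.emb N n, f φ) / ((S.emb N n).card : ℝ)

/-- The entropy `Ent(b) = -log vol(b)`, valued in `EReal` (so `Ent(b) = ⊤` when
`vol(b) = 0`). -/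
def entE {ι : Type} [Fintype ι] (b : Set (ι → ℝ)) : EReal := -(ENNReal.log (volume b))

/-- Extremal entropy `ex(V_n, P_n) = inf { Ent(b) : b a box with vol(b \ P_n) = 0 }`. -/
def Ssee.exEnt (S : Ssee) (P : ∀ n, Set (S.V n → ℝ)) (n : ℕ) : EReal :=
  sInf {e : EReal | ∃ b : Set (S.V n → ℝ), IsBox b ∧ volume (b \ P n) = 0 ∧ e = entE b}

/-! If a box `∏ Aᵢ` (all `Aᵢ` of positive measure) lies in `P_n` up to a null set, then its
restriction `∏ A_{φ j}` along any embedding `φ` lies in `P_N` up to a null set: by heredity, the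
lift of the bad part of the restriction, cut down to `∏ Aᵢ`, lies in the bad part of `∏ Aᵢ`,
and by Fubini it has measure `vol(bad part) · ∏_{i ∉ im φ} vol Aᵢ`. Entropy is additive over
the factors, and by homogeneity every vertex of `V_n` is covered equally often by the images of
embeddings, so averaging over `φ` yields one with `Ent(∏ A_{φ j}) ≤ |V_N|/|V_n| · Ent(∏ Aᵢ)`. -/

section Box

variable {ι : Type}

lemma univ_pi_subset_unitCube {A : ι → Set ℝ} (hA : ∀ i, A i ⊆ Icc 0 1) :
    univ.pi A ⊆ unitCube ι :=
  fun _ hx i _ => hA i (hx i (mem_univ i))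

variable [Fintype ι]

lemma volume_unitCube : volume (unitCube ι) = 1 := by
  rw [unitCube, volume_pi_pi]
  simp [Real.volume_Icc]

lemma entE_nonneg_of_isBox {b : Set (ι → ℝ)} (hb : IsBox b) : 0 ≤ entE b := by
  obtain ⟨A, hA, rfl⟩ := hb
  have hvol : volume (univ.pi A) ≤ 1 :=
    volume_unitCube (ι := ι) ▸ measure_mono (univ_pi_subset_unitCube fun i => (hA i).2)
  simpa [entE] using EReal.neg_le_neg_iff.2 (ENNReal.log_le_zero_iff.2 hvol)

lemma entE_univ_pi {A : ι → Set ℝ} (h0 : ∀ i, volume (A i) ≠ 0)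
    (htop : ∀ i, volume (A i) ≠ ⊤) :
    entE (univ.pi A) = ((∑ i, -Real.log (volume (A i)).toReal : ℝ) : EReal) := by
  have hprod0 : ∏ i, volume (A i) ≠ 0 := Finset.prod_ne_zero_iff.2 fun i _ => h0 i
  have hprodtop : ∏ i, volume (A i) ≠ ⊤ := ENNReal.prod_ne_top fun i _ => htop i
  rw [entE, volume_pi_pi, ENNReal.log_pos_real hprod0 hprodtop, ENNReal.toReal_prod,
    Real.log_prod fun i _ => ENNReal.toReal_ne_zero.2 ⟨h0 i, htop i⟩, Finset.sum_neg_distrib,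
    EReal.coe_neg]

end Box

lemma volume_preimage_comp_inter_pi {α β : Type} [Fintype α] [Fintype β] [DecidableEq β]
    {φ : α → β} (hφ : Function.Injective φ) {s : Set (α → ℝ)} (hs : MeasurableSet s)
    {B : β → Set ℝ} (hB : ∀ i, MeasurableSet (B i)) :
    volume ((fun d j => d (φ j)) ⁻¹' s ∩ univ.pi B) =
      volume (s ∩ univ.pi fun j => B (φ j)) *
        ∏ i ∈ (Finset.univ.image φ)ᶜ, volume (B i) := by
  let p : β → Prop := (· ∈ Finset.univ.image φ)
  let eα : α ≃ {i // p i} :=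
    (Equiv.ofInjective φ hφ).trans (Equiv.subtypeEquivRight fun i => by simp [p])
  let F : (β → ℝ) → (α → ℝ) × ({i // ¬ p i} → ℝ) :=
    Prod.map (MeasurableEquiv.piCongrLeft (fun _ => ℝ) eα).symm id ∘
      MeasurableEquiv.piEquivPiSubtypeProd (fun _ => ℝ) p
  have hF : MeasurePreserving F volume (volume.prod volume) := by
    refine (((volume_measurePreserving_piCongrLeft (fun _ => ℝ) eα).symm _).prod
      (MeasurePreserving.id _)).comp ?_
    rw [← Measure.volume_eq_prod]
    exact volume_preserving_piEquivPiSubtypeProd (fun _ => ℝ) p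
  have hpre : (fun d j => d (φ j)) ⁻¹' s ∩ univ.pi B =
      F ⁻¹' ((s ∩ univ.pi fun j => B (φ j)) ×ˢ univ.pi fun i : {i // ¬ p i} => B i) := by
    ext d
    have hFd : (F d).1 = fun j => d (φ j) := by
      funext j
      simp [F, MeasurableEquiv.piCongrLeft, Equiv.piCongrLeft, eα]
    simp only [mem_inter_iff, mem_preimage, mem_prod, hFd, mem_univ_pi]
    constructor
    · rintro ⟨hs, hB⟩
      exact ⟨⟨hs, fun j => hB _⟩, fun i => hB i⟩
    · rintro ⟨⟨hs, hBφ⟩, hBc⟩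
      refine ⟨hs, fun i => ?_⟩
      by_cases hi : p i
      · obtain ⟨j, -, rfl⟩ := Finset.mem_image.1 hi
        exact hBφ j
      · exact hBc ⟨i, hi⟩
  rw [hpre, hF.measure_preimage (((hs.inter (.univ_pi fun j => hB _)).prod
      (.univ_pi fun i => hB _)).nullMeasurableSet), Measure.prod_prod,
    volume_pi_pi]
  congr 1
  exact (Finset.prod_subtype (p := fun i => ¬ p i) _ (fun i => by simp [p])
    fun i => volume (B i)).symm

section UniformCover

variable {α β : Type} [Fintype α] [Fintype β] [DecidableEq β]
  {Φ : Finset (α → β)} {k : ℕ}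

lemma sum_sum_comp_eq_mul_sum (hinj : ∀ φ ∈ Φ, Function.Injective φ)
    (hk : ∀ x, (Φ.filter fun φ => x ∈ Finset.univ.image φ).card = k) (F : β → ℝ) :
    ∑ φ ∈ Φ, ∑ j, F (φ j) = k * ∑ x, F x := by
  calc ∑ φ ∈ Φ, ∑ j, F (φ j)
      = ∑ φ ∈ Φ, ∑ x, if x ∈ Finset.univ.image φ then F x else 0 := by
        refine Finset.sum_congr rfl fun φ hφ => ?_
        rw [Finset.sum_ite_mem, Finset.univ_inter,
          Finset.sum_image fun a _ b _ h => hinj φ hφ h]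
    _ = ∑ x, ((Φ.filter fun φ => x ∈ Finset.univ.image φ).card : ℝ) * F x := by
        rw [Finset.sum_comm]
        simp only [← Finset.sum_filter, Finset.sum_const, nsmul_eq_mul]
    _ = k * ∑ x, F x := by simp only [hk, Finset.mul_sum]

lemma exists_mem_card_mul_sum_comp_le [Nonempty β] (hinj : ∀ φ ∈ Φ, Function.Injective φ)
    (hk : ∀ x, (Φ.filter fun φ => x ∈ Finset.univ.image φ).card = k) (hk0 : 0 < k)
    (F : β → ℝ) :
    ∃ φ ∈ Φ, (Fintype.card β : ℝ) * ∑ j, F (φ j) ≤ Fintype.card α * ∑ x, F x := by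
  obtain ⟨x⟩ := ‹Nonempty β›
  have hΦ : Φ.Nonempty := (Finset.card_pos.1 (hk x ▸ hk0)).mono (Finset.filter_subset _ _)
  have hcard : (Φ.card : ℝ) * Fintype.card α = k * Fintype.card β := by
    simpa [mul_comm] using sum_sum_comp_eq_mul_sum hinj hk fun _ => (1 : ℝ)
  obtain ⟨φ, hφ, hle⟩ := Finset.exists_le_of_sum_le hΦ
    (f := fun φ => (Φ.card : ℝ) * ∑ j, F (φ j))
    (g := fun _ => ∑ φ ∈ Φ, ∑ j, F (φ j))
    (by rw [← Finset.mul_sum, Finset.sum_const, nsmul_eq_mul])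
  refine ⟨φ, hφ, le_of_mul_le_mul_left ?_ (Nat.cast_pos.2 hk0 : (0 : ℝ) < k)⟩
  rw [sum_sum_comp_eq_mul_sum hinj hk] at hle
  calc (k : ℝ) * (Fintype.card β * ∑ j, F (φ j))
      = Fintype.card α * (Φ.card * ∑ j, F (φ j)) := by
        linear_combination (∑ j, F (φ j)) * hcard.symm
    _ ≤ Fintype.card α * (k * ∑ x, F x) := by gcongr
    _ = k * (Fintype.card α * ∑ x, F x) := by ring

end UniformCover

namespace Ssee

lemma exEnt_nonneg (S : Ssee) (P : ∀ n, Set (S.V n → ℝ)) (n : ℕ) : 0 ≤ S.exEnt P n :=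
  le_sInf fun _ ⟨_, hb, _, he⟩ => he ▸ entE_nonneg_of_isBox hb

variable {S : Ssee} {P : ∀ n, Set (S.V n → ℝ)}

lemma Hereditary.volume_pi_comp_diff_eq_zero (hP : S.Hereditary P) {N n : ℕ} (hNn : N ≤ n)
    {φ : S.V N → S.V n} (hφ : φ ∈ S.emb N n) {A : S.V n → Set ℝ}
    (hA : ∀ i, MeasurableSet (A i) ∧ A i ⊆ Icc 0 1) (hA0 : ∀ i, volume (A i) ≠ 0)
    (hvol : volume (univ.pi A \ P n) = 0) :
    volume (univ.pi (fun j => A (φ j)) \ P N) = 0 := by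
  have hbad : (fun d j => d (φ j)) ⁻¹' (P N)ᶜ ∩ univ.pi A ⊆ univ.pi A \ P n := by
    rintro d ⟨hdP, hdA⟩
    have hlift : d ∈ liftBody φ (unitCube (S.V N) \ P N) :=
      ⟨univ_pi_subset_unitCube (fun i => (hA i).2) hdA,
        univ_pi_subset_unitCube (fun j => (hA (φ j)).2) fun j _ => hdA (φ j) trivial, hdP⟩
    exact ⟨hdA, (hP.2 N n hNn (mem_biUnion hφ hlift)).2⟩
  have hprod := volume_preimage_comp_inter_pi (S.emb_inj N n hNn φ hφ) (hP.1 N).1.compl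
    fun i => (hA i).1
  rw [measure_mono_null hbad hvol, inter_comm, ← sdiff_eq, eq_comm] at hprod
  exact (mul_eq_zero.1 hprod).resolve_right (Finset.prod_ne_zero_iff.2 fun i _ => hA0 i)

lemma exEnt_div_card_le_entE_div_card (hHom : S.Homogeneous) (hP : S.Hereditary P) {N n : ℕ}
    (hNn : N ≤ n) {b : Set (S.V n → ℝ)} (hb : IsBox b) (hvol : volume (b \ P n) = 0) :
    S.exEnt P N / ((Fintype.card (S.V N) : ℝ) : EReal) ≤
      entE b / ((Fintype.card (S.V n) : ℝ) : EReal) := by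
  obtain ⟨A, hA, rfl⟩ := hb
  have hcardN : (0 : ℝ) < Fintype.card (S.V N) := Nat.cast_pos.2 Fintype.card_pos
  have hcardn : (0 : ℝ) < Fintype.card (S.V n) := Nat.cast_pos.2 Fintype.card_pos
  by_cases hb0 : volume (univ.pi A) = 0
  · rw [show entE (univ.pi A) = ⊤ by simp [entE, hb0],
      EReal.top_div_of_pos_ne_top (EReal.coe_pos.2 hcardn) (EReal.coe_ne_top _)]
    exact le_top
  have hA0 : ∀ i, volume (A i) ≠ 0 := fun i h =>
    hb0 (volume_pi_pi A ▸ Finset.prod_eq_zero (Finset.mem_univ i) h)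
  have hAtop : ∀ i, volume (A i) ≠ ⊤ := fun i =>
    ne_top_of_le_ne_top (by simp [Real.volume_Icc]) (measure_mono (hA i).2)
  obtain ⟨k, hk0, hk⟩ := hHom N n hNn
  obtain ⟨φ, hφ, hle⟩ := exists_mem_card_mul_sum_comp_le (S.emb_inj N n hNn) hk hk0
    fun i => -Real.log (volume (A i)).toReal
  have hexφ : S.exEnt P N ≤ entE (univ.pi fun j => A (φ j)) :=
    sInf_le ⟨_, ⟨_, fun j => hA (φ j), rfl⟩,
      hP.volume_pi_comp_diff_eq_zero hNn hφ hA hA0 hvol, rfl⟩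
  rw [entE_univ_pi (fun j => hA0 (φ j)) fun j => hAtop (φ j)] at hexφ
  rw [entE_univ_pi hA0 hAtop, ← EReal.coe_div]
  refine (EReal.div_le_div_right_of_nonneg (EReal.coe_nonneg.2 hcardN.le) hexφ).trans ?_
  rw [← EReal.coe_div, EReal.coe_le_coe_iff, div_le_div_iff₀ hcardN hcardn]
  linarith

lemma exEnt_div_card_monotone (hHom : S.Homogeneous) (hP : S.Hereditary P) :
    Monotone fun n => S.exEnt P n / ((Fintype.card (S.V n) : ℝ) : EReal) := by
  intro N n hNn
  have hcard : (0 : EReal) < ((Fintype.card (S.V n) : ℝ) : EReal) :=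
    EReal.coe_pos.2 (Nat.cast_pos.2 Fintype.card_pos)
  dsimp only
  rw [EReal.le_div_iff_mul_le hcard (EReal.coe_ne_top _)]
  refine le_sInf ?_
  rintro _ ⟨b, hb, hvol, rfl⟩
  rw [← EReal.le_div_iff_mul_le hcard (EReal.coe_ne_top _)]
  exact exEnt_div_card_le_entE_div_card hHom hP hNn hb hvol

end Ssee

theorem exEnt_ratio_monotone_of_homogeneous_general
    (S : Ssee) (hHom : S.Homogeneous)
    (P : ∀ n, Set (S.V n → ℝ)) (hP : S.Hereditary P) :
    Monotone (fun n => S.exEnt P n / ((Fintype.card (S.V n) : ℝ) : EReal)) ∧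
    (∀ n, (0 : EReal) ≤ S.exEnt P n / ((Fintype.card (S.V n) : ℝ) : EReal)) ∧
    ∃ L : EReal, Tendsto (fun n => S.exEnt P n / ((Fintype.card (S.V n) : ℝ) : EReal))
      atTop (nhds L) := by
  have hmono := S.exEnt_div_card_monotone hHom hP
  refine ⟨hmono, fun n => EReal.div_nonneg (S.exEnt_nonneg P n) ?_, _, tendsto_atTop_iSup hmono⟩
  exact EReal.coe_nonneg.2 (Nat.cast_nonneg _)

/-- **Proposition (existence of limits from homogeneity).**
If `V` is a good homogeneous ssee, then for every hereditary property `P` of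
`[0,1]`-decorations of `V`, the sequence `ex(V_n, P_n)/|V_n|` (valued in
`ℝ≥0 ∪ {∞} ⊆ EReal`) is non-decreasing; in particular it converges to a limit in
`EReal` (a real number or `∞`). -/
theorem exEnt_ratio_monotone_of_homogeneous
    (S : Ssee) (hS : S.Good) (hHom : S.Homogeneous)
    (P : ∀ n, Set (S.V n → ℝ)) (hP : S.Hereditary P) :
    Monotone (fun n => S.exEnt P n / ((Fintype.card (S.V n) : ℝ) : EReal)) ∧
    (∀ n, (0 : EReal) ≤ S.exEnt P n / ((Fintype.card (S.V n) : ℝ) : EReal)) ∧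
    ∃ L : EReal, Tendsto (fun n => S.exEnt P n / ((Fintype.card (S.V n) : ℝ) : EReal))
      atTop (nhds L) :=
  exEnt_ratio_monotone_of_homogeneous_general S hHom P hP

end
end

section
/- Let c > 0 and let A, B ⊆ ℝ be Lebesgue-measurable sets of positive measure such that for Lebesgue-almost every pair (a, b) ∈ A × B one has |a − b| ≤ c. Then λ(A) + λ(B) ≤ 2c, and consequently λ(A)·λ(B) ≤ c². -/
/-!
For almost every `a ∈ A`, Fubini puts almost all of `B` inside `[a - c, a + c]`. Two such
points `a₁, a₂` therefore confine `B` to an interval of length `2c - |a₁ - a₂|`, so the good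
points of `A` have diameter at most `2c - λ(B)`, and `λ(A)` is at most that diameter.
The product bound is AM-GM.
-/

open MeasureTheory Set Metric

lemma Real.volume_closedBall_inter_closedBall (x y r : ℝ) :
    volume (closedBall x r ∩ closedBall y r) = ENNReal.ofReal (2 * r - dist x y) := by
  rw [Real.closedBall_eq_Icc, Real.closedBall_eq_Icc, Icc_inter_Icc, Real.volume_Icc,
    max_sub_sub_right, min_add_add_right, Real.dist_eq, ← abs_sub_comm, ← max_sub_min_eq_abs]
  ring_nf

lemma Real.edist_add_volume_le_of_ae_subset_closedBall {B : Set ℝ} {x y r : ℝ}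
    (hB : 0 < volume B) (hx : B ≤ᵐ[volume] closedBall x r) (hy : B ≤ᵐ[volume] closedBall y r) :
    edist x y + volume B ≤ ENNReal.ofReal (2 * r) := by
  have hBle : volume B ≤ ENNReal.ofReal (2 * r - dist x y) := by
    simpa only [inter_self, Real.volume_closedBall_inter_closedBall] using
      measure_mono_ae (ae_le_set_inter hx hy)
  have hdist : dist x y < 2 * r := by
    by_contra! hr
    rw [ENNReal.ofReal_of_nonpos (by linarith)] at hBle
    exact hB.ne' (le_zero_iff.mp hBle)
  calc edist x y + volume B
      ≤ ENNReal.ofReal (dist x y) + ENNReal.ofReal (2 * r - dist x y) := by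
        rw [edist_dist]; gcongr
    _ = ENNReal.ofReal (2 * r) := by
        rw [← ENNReal.ofReal_add dist_nonneg (by linarith)]; ring_nf

lemma Real.volume_add_le_of_edist_add_le {s : Set ℝ} (hs : s.Nonempty) {m M : ENNReal}
    (h : ∀ x ∈ s, ∀ y ∈ s, edist x y + m ≤ M) : volume s + m ≤ M :=
  calc volume s + m ≤ ediam s + m := by gcongr; exact Real.volume_le_diam s
    _ ≤ M := by
      rw [ediam, ENNReal.biSup_add' hs]
      refine iSup₂_le fun x hx => ?_
      rw [ENNReal.biSup_add' hs]
      exact iSup₂_le (h x hx)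

lemma ae_subset_closedBall_of_volume_prod_null {A B : Set ℝ} {c : ℝ}
    (h : volume {p : ℝ × ℝ | p.1 ∈ A ∧ p.2 ∈ B ∧ c < |p.1 - p.2|} = 0) :
    ∀ᵐ a, a ∈ A → B ≤ᵐ[volume] closedBall a c := by
  filter_upwards [Measure.measure_ae_null_of_prod_null h] with a ha haA
  refine ae_le_set.mpr (measure_mono_null (fun b hb => ?_) ha)
  simp only [mem_sdiff, mem_closedBall, Real.dist_eq, not_le] at hb
  exact ⟨haA, hb.1, abs_sub_comm b a ▸ hb.2⟩

lemma ENNReal.mul_le_ofReal_sq_of_add_le {a b : ENNReal} {c : ℝ}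
    (h : a + b ≤ ENNReal.ofReal (2 * c)) : a * b ≤ ENNReal.ofReal (c ^ 2) := by
  rcases lt_or_ge c 0 with hc | hc
  · rw [ofReal_of_nonpos (by linarith), nonpos_iff_eq_zero, add_eq_zero] at h
    simp [h.1]
  have ha : a ≠ ⊤ := ne_top_of_le_ne_top ofReal_ne_top (le_self_add.trans h)
  have hb : b ≠ ⊤ := ne_top_of_le_ne_top ofReal_ne_top (le_add_self.trans h)
  have hreal : a.toReal + b.toReal ≤ 2 * c := by
    rw [← toReal_add ha hb]
    exact toReal_le_of_le_ofReal (by linarith) h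
  rw [← ofReal_toReal ha, ← ofReal_toReal hb, ← ofReal_mul toReal_nonneg]
  exact ofReal_le_ofReal <| by
    nlinarith [sq_nonneg (a.toReal - b.toReal), toReal_nonneg (a := a), toReal_nonneg (a := b)]

theorem measure_add_le_of_ae_close_general (c : ℝ)
    (A B : Set ℝ)
    (hA0 : 0 < volume A) (hB0 : 0 < volume B)
    (h : volume {p : ℝ × ℝ | p.1 ∈ A ∧ p.2 ∈ B ∧ c < |p.1 - p.2|} = 0) :
    volume A + volume B ≤ ENNReal.ofReal (2 * c) ∧
    volume A * volume B ≤ ENNReal.ofReal (c ^ 2) := by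
  set G := {a ∈ A | B ≤ᵐ[volume] closedBall a c}
  have hGA : volume G = volume A :=
    le_antisymm (measure_mono fun _ ha => ha.1) <| measure_mono_ae <|
      (ae_subset_closedBall_of_volume_prod_null h).mono fun a ha haA => ⟨haA, ha haA⟩
  have hG : G.Nonempty := nonempty_of_measure_ne_zero (hGA ▸ hA0.ne')
  have hsum : volume A + volume B ≤ ENNReal.ofReal (2 * c) := hGA ▸
    Real.volume_add_le_of_edist_add_le hG fun x hx y hy =>
      Real.edist_add_volume_le_of_ae_subset_closedBall hB0 hx.2 hy.2
  exact ⟨hsum, ENNReal.mul_le_ofReal_sq_of_add_le hsum⟩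

/-- **Lemma.** Let `c > 0` and let `A, B ⊆ ℝ` be measurable sets of positive measure
such that for almost every pair `(a,b) ∈ A × B` one has `|a − b| ≤ c`.  Then
`λ(A) + λ(B) ≤ 2c`, and consequently `λ(A)·λ(B) ≤ c²`. -/
theorem measure_add_le_of_ae_close (c : ℝ) (hc : 0 < c)
    (A B : Set ℝ) (hA : MeasurableSet A) (hB : MeasurableSet B)
    (hA0 : 0 < volume A) (hB0 : 0 < volume B)
    (h : volume {p : ℝ × ℝ | p.1 ∈ A ∧ p.2 ∈ B ∧ c < |p.1 - p.2|} = 0) :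
    volume A + volume B ≤ ENNReal.ofReal (2 * c) ∧
    volume A * volume B ≤ ENNReal.ofReal (c ^ 2) :=
  measure_add_le_of_ae_close_general c A B hA0 hB0 h
end

section
/- For all n ≥ 3, the extremal entropy of the metric polytope satisfies ex(E(K_n), M_n) = binom(n,2)·log 2; that is, every box b = ∏_{e ∈ E(K_n)} A_e (with each A_e ⊆ [0,1] Lebesgue-measurable) satisfying vol(b \ M_n) = 0 has vol(b) ≤ 2^{−binom(n,2)}, and the box [1/2, 1]^{E(K_n)} is contained in M_n and has volume exactly 2^{−binom(n,2)}. -/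
/-!
For an edge `e`, let `lo e` and `hi e` be the essential infimum and supremum of `A e`, so that
`vol (A e) ≤ hi e - lo e`. If `hi {i,j} > lo {j,k} + lo {k,i}`, the sub-box on which these three
coordinates lie within `ε` of their essential endpoints has positive measure but misses `M_n`;
hence `hi {i,j} ≤ lo {j,k} + lo {k,i}` on every triangle. Adding the three rotations and using
`hi ≤ 1` bounds the sum of the widths `hi - lo` on a triangle by `3/2`, so by AM-GM their product
is at most `1/8`. Every edge lies in `n - 2` triangles, so the product of these bounds over all
triangles reads `(∏ₑ (hi e - lo e)) ^ (n - 2) ≤ (1/2) ^ ((n - 2) * C(n,2))`.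
-/

open MeasureTheory Filter Set

noncomputable section

/-- The edge set of the complete graph `K_n`, encoded as ordered pairs `(i,j)` with
`i < j`. -/
def EdgeType (n : ℕ) : Type := {p : Fin n × Fin n // p.1 < p.2}

instance (n : ℕ) : Fintype (EdgeType n) := Subtype.fintype _
instance (n : ℕ) : DecidableEq (EdgeType n) := Subtype.instDecidableEq

/-- The edge `{i,j}` for distinct `i j`. -/
def edgeOf {n : ℕ} (i j : Fin n) (h : i ≠ j) : EdgeType n :=
  if hij : i < j then ⟨(i, j), hij⟩ else ⟨(j, i), (not_lt.mp hij).lt_of_ne' h⟩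

/-- The value of an edge-decoration `d` on the unordered pair `{i,j}` (junk value `0`
if `i = j`). -/
def dval {n : ℕ} (d : EdgeType n → ℝ) (i j : Fin n) : ℝ :=
  if h : i = j then 0 else d (edgeOf i j h)

/-- The metric polytope `M_n ⊆ [0,1]^{E(K_n)}`: distances in `[0,1]` satisfying all
triangle inequalities. -/
def metricPolytope (n : ℕ) : Set (EdgeType n → ℝ) :=
  {d | (∀ e, d e ∈ Set.Icc (0:ℝ) 1) ∧
    ∀ i j k : Fin n, i ≠ j → j ≠ k → i ≠ k → dval d i j ≤ dval d i k + dval d k j}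

section EssentialEndpoints

variable {A : Set ℝ} {a b : ℝ}

lemma ae_restrict_mem_Icc_of_subset (hA : A ⊆ Icc a b) :
    ∀ᵐ x ∂volume.restrict A, x ∈ Icc a b :=
  ae_restrict_of_ae_restrict_of_subset hA (ae_restrict_mem measurableSet_Icc)

lemma isBoundedUnder_le_ae_restrict (hA : A ⊆ Icc a b) :
    IsBoundedUnder (· ≤ ·) (ae (volume.restrict A)) id :=
  isBoundedUnder_of_eventually_le ((ae_restrict_mem_Icc_of_subset hA).mono fun _ hx => hx.2)

lemma isBoundedUnder_ge_ae_restrict (hA : A ⊆ Icc a b) :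
    IsBoundedUnder (· ≥ ·) (ae (volume.restrict A)) id :=
  isBoundedUnder_of_eventually_ge ((ae_restrict_mem_Icc_of_subset hA).mono fun _ hx => hx.1)

lemma isCoboundedUnder_le_ae_restrict (hA : A ⊆ Icc a b) (h0 : volume A ≠ 0) :
    IsCoboundedUnder (· ≤ ·) (ae (volume.restrict A)) id :=
  have : (ae (volume.restrict A)).NeBot := ae_neBot.2 (by simpa using h0)
  (isBoundedUnder_ge_ae_restrict hA).isCoboundedUnder_flip

lemma isCoboundedUnder_ge_ae_restrict (hA : A ⊆ Icc a b) (h0 : volume A ≠ 0) :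
    IsCoboundedUnder (· ≥ ·) (ae (volume.restrict A)) id :=
  have : (ae (volume.restrict A)).NeBot := ae_neBot.2 (by simpa using h0)
  (isBoundedUnder_le_ae_restrict hA).isCoboundedUnder_flip

lemma volume_inter_Ioi_ne_zero_of_lt_essSup (hA : A ⊆ Icc a b) (h0 : volume A ≠ 0) {c : ℝ}
    (hc : c < essSup id (volume.restrict A)) : volume (A ∩ Ioi c) ≠ 0 := by
  intro hnull
  refine (essSup_le_of_ae_le c ?_ (isCoboundedUnder_le_ae_restrict hA h0)).not_gt hc
  rw [EventuallyLE, ae_iff, show {x : ℝ | ¬ id x ≤ c} = Ioi c by ext; simp,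
    Measure.restrict_apply measurableSet_Ioi, inter_comm, hnull]

lemma volume_inter_Iio_ne_zero_of_essInf_lt (hA : A ⊆ Icc a b) (h0 : volume A ≠ 0) {c : ℝ}
    (hc : essInf id (volume.restrict A) < c) : volume (A ∩ Iio c) ≠ 0 := by
  intro hnull
  refine (le_essInf_of_ae_le c ?_ (isCoboundedUnder_ge_ae_restrict hA h0)).not_gt hc
  rw [EventuallyLE, ae_iff, show {x : ℝ | ¬ c ≤ id x} = Iio c by ext; simp,
    Measure.restrict_apply measurableSet_Iio, inter_comm, hnull]

lemma essSup_id_restrict_le (hA : A ⊆ Icc a b) (h0 : volume A ≠ 0) :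
    essSup id (volume.restrict A) ≤ b :=
  essSup_le_of_ae_le b ((ae_restrict_mem_Icc_of_subset hA).mono fun _ hx => hx.2)
    (isCoboundedUnder_le_ae_restrict hA h0)

lemma volume_le_essSup_sub_essInf (hA : A ⊆ Icc a b) :
    volume A ≤ ENNReal.ofReal
      (essSup id (volume.restrict A) - essInf id (volume.restrict A)) := by
  have hmem : ∀ᵐ x ∂volume.restrict A,
      x ∈ Icc (essInf id (volume.restrict A)) (essSup id (volume.restrict A)) :=
    (ae_essInf_le (isBoundedUnder_ge_ae_restrict hA)).and
      (ae_le_essSup (isBoundedUnder_le_ae_restrict hA))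
  calc volume A = volume.restrict A univ := (Measure.restrict_apply_univ A).symm
    _ ≤ volume.restrict A (Icc _ _) := measure_mono_ae (hmem.mono fun x hx _ => hx)
    _ ≤ volume (Icc _ _) := Measure.restrict_apply_le _ _
    _ = _ := Real.volume_Icc

end EssentialEndpoints

lemma exists_mem_pi_of_measure_pi_diff_eq_zero {ι : Type*} [Fintype ι] {X : ι → Type*}
    [∀ i, MeasurableSpace (X i)] {μ : ∀ i, Measure (X i)} [∀ i, SigmaFinite (μ i)]
    {A B : ∀ i, Set (X i)} {P : Set (∀ i, X i)}
    (hnull : Measure.pi μ (univ.pi A \ P) = 0) (hBA : ∀ i, B i ⊆ A i) (hB : ∀ i, μ i (B i) ≠ 0) :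
    ∃ d ∈ P, ∀ i, d i ∈ B i := by
  by_contra! h
  have hsub : univ.pi B ⊆ univ.pi A \ P := fun d hd =>
    ⟨fun i _ => hBA i (hd i trivial), fun hdP => let ⟨i, hi⟩ := h d hdP; hi (hd i trivial)⟩
  have := measure_mono_null hsub hnull
  rw [Measure.pi_pi, Finset.prod_eq_zero_iff] at this
  obtain ⟨i, -, hi⟩ := this
  exact hB i hi

lemma essSup_le_essInf_add_essInf_of_pi_ae_subset {ι : Type*} [Fintype ι] [DecidableEq ι]
    {A : ι → Set ℝ} {a b : ℝ} {P : Set (ι → ℝ)} (hA : ∀ i, A i ⊆ Icc a b)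
    (h0 : ∀ i, volume (A i) ≠ 0) (hnull : volume (univ.pi A \ P) = 0)
    {e f g : ι} (hef : e ≠ f) (heg : e ≠ g) (hfg : f ≠ g) (hP : ∀ d ∈ P, d e ≤ d f + d g) :
    essSup id (volume.restrict (A e)) ≤
      essInf id (volume.restrict (A f)) + essInf id (volume.restrict (A g)) := by
  set hi := essSup id (volume.restrict (A e))
  set lo₁ := essInf id (volume.restrict (A f))
  set lo₂ := essInf id (volume.restrict (A g))
  by_contra! hlt
  set ε := (hi - lo₁ - lo₂) / 3 with hε
  have hε0 : 0 < ε := by linarith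
  let B : ι → Set ℝ := fun i => A i ∩
    if i = e then Ioi (hi - ε) else if i = f then Iio (lo₁ + ε) else if i = g then Iio (lo₂ + ε)
    else univ
  have hB : ∀ i, volume (B i) ≠ 0 := by
    intro i
    simp only [B]
    split_ifs with he hf hg
    · subst he; exact volume_inter_Ioi_ne_zero_of_lt_essSup (hA i) (h0 i) (by linarith)
    · subst hf; exact volume_inter_Iio_ne_zero_of_essInf_lt (hA i) (h0 i) (by linarith)
    · subst hg; exact volume_inter_Iio_ne_zero_of_essInf_lt (hA i) (h0 i) (by linarith)
    · simpa using h0 i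
  obtain ⟨d, hdP, hdB⟩ :=
    exists_mem_pi_of_measure_pi_diff_eq_zero hnull (fun i => inter_subset_left) hB
  have hde : hi - ε < d e := by simpa [B] using (hdB e).2
  have hdf : d f < lo₁ + ε := by simpa [B, hef.symm] using (hdB f).2
  have hdg : d g < lo₂ + ε := by simpa [B, heg.symm, hfg.symm] using (hdB g).2
  linarith [hP d hdP]

lemma mul_mul_le_one_div_eight {x y z : ℝ} (hx : 0 ≤ x) (hy : 0 ≤ y) (hz : 0 ≤ z)
    (hs : x + y + z ≤ 3 / 2) : x * y * z ≤ 1 / 8 := by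
  nlinarith [sq_nonneg (x - y), sq_nonneg (y - z), sq_nonneg (x - z), mul_nonneg hx hy,
    mul_nonneg hy hz, mul_nonneg hx hz]

lemma sub_mul_sub_mul_sub_le_one_div_eight {m₁ m₂ m₃ M₁ M₂ M₃ : ℝ}
    (h₁ : m₁ ≤ M₁) (h₂ : m₂ ≤ M₂) (h₃ : m₃ ≤ M₃) (hM₁ : M₁ ≤ 1) (hM₂ : M₂ ≤ 1) (hM₃ : M₃ ≤ 1)
    (t₁ : M₁ ≤ m₂ + m₃) (t₂ : M₂ ≤ m₃ + m₁) (t₃ : M₃ ≤ m₁ + m₂) :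
    (M₁ - m₁) * (M₂ - m₂) * (M₃ - m₃) ≤ 1 / 8 :=
  mul_mul_le_one_div_eight (sub_nonneg.2 h₁) (sub_nonneg.2 h₂) (sub_nonneg.2 h₃) (by linarith)

section Triples

variable {α M : Type*} [Fintype α] [DecidableEq α] [CommMonoid M]

def prodOrderedTriangles (g : α → α → M) : M :=
  ∏ t : α × α × α, if t.1 ≠ t.2.1 ∧ t.2.1 ≠ t.2.2 ∧ t.2.2 ≠ t.1 then
    g t.1 t.2.1 * g t.2.1 t.2.2 * g t.2.2 t.1 else 1

theorem prodOrderedTriangles_eq_pow (g : α → α → M) :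
    prodOrderedTriangles g =
      (∏ i, ∏ j, if i ≠ j then g i j else 1) ^ (3 * (Fintype.card α - 2)) := by
  -- `ρ` rotates a triple, cycling the three edge factors of each term.
  let ρ : α × α × α ≃ α × α × α :=
    ⟨fun t => (t.2.1, t.2.2, t.1), fun t => (t.2.2, t.1, t.2.1), fun _ => rfl, fun _ => rfl⟩
  let h : α × α × α → M := fun t =>
    if t.1 ≠ t.2.1 ∧ t.2.1 ≠ t.2.2 ∧ t.2.2 ≠ t.1 then g t.1 t.2.1 else 1
  have hsplit : ∀ t : α × α × α, (if t.1 ≠ t.2.1 ∧ t.2.1 ≠ t.2.2 ∧ t.2.2 ≠ t.1 then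
      g t.1 t.2.1 * g t.2.1 t.2.2 * g t.2.2 t.1 else 1) = h t * h (ρ t) * h (ρ (ρ t)) := by
    intro t
    simp only [h, ρ, Equiv.coe_fn_mk]
    split_ifs <;> simp_all
  have hρ : ∀ f : α × α × α → M, ∏ t, f (ρ t) = ∏ t, f t := Equiv.prod_comp ρ
  have hthird : ∀ i j : α, (∏ k, if i ≠ j ∧ j ≠ k ∧ k ≠ i then g i j else 1) =
      (if i ≠ j then g i j else 1) ^ (Fintype.card α - 2) := by
    intro i j
    by_cases hij : i = j
    · simp [hij]
    · rw [← Finset.prod_filter, Finset.prod_const, if_pos hij,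
        show Finset.univ.filter (fun k => i ≠ j ∧ j ≠ k ∧ k ≠ i) = Finset.univ \ {i, j} by
          ext k
          simp only [Finset.mem_filter, Finset.mem_univ, true_and, Finset.mem_sdiff,
            Finset.mem_insert, Finset.mem_singleton, not_or]
          tauto,
        Finset.card_sdiff_of_subset (Finset.subset_univ _), Finset.card_pair hij, Finset.card_univ]
  rw [prodOrderedTriangles, Fintype.prod_congr _ _ hsplit, Finset.prod_mul_distrib,
    Finset.prod_mul_distrib, hρ (fun t => h (ρ t)), hρ h]
  have hprod : ∏ t, h t = (∏ i, ∏ j, if i ≠ j then g i j else 1) ^ (Fintype.card α - 2) := by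
    simp only [Fintype.prod_prod_type, h, hthird, Finset.prod_pow]
  rw [hprod, ← pow_add, ← pow_add]
  ring_nf

theorem prodOrderedTriangles_le {R : Type*} [CommSemiring R] [PartialOrder R] [IsOrderedRing R]
    {g h : α → α → R} (hg : ∀ i j, 0 ≤ g i j)
    (hgh : ∀ i j k, i ≠ j → j ≠ k → k ≠ i → g i j * g j k * g k i ≤ h i j * h j k * h k i) :
    prodOrderedTriangles g ≤ prodOrderedTriangles h := by
  refine Finset.prod_le_prod (fun t _ => ?_) (fun t _ => ?_) <;> split_ifs with ht
  · exact mul_nonneg (mul_nonneg (hg _ _) (hg _ _)) (hg _ _)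
  · exact zero_le_one
  · exact hgh _ _ _ ht.1 ht.2.1 ht.2.2
  · exact le_rfl

end Triples

theorem prod_ite_ne_eq_sq {α M : Type*} [Fintype α] [LinearOrder α] [CommMonoid M]
    {g : α → α → M} (hg : ∀ i j, g i j = g j i) :
    ∏ i, ∏ j, (if i ≠ j then g i j else 1) = (∏ i, ∏ j, if i < j then g i j else 1) ^ 2 := by
  have hsplit : ∀ i j, (if i ≠ j then g i j else 1) =
      (if i < j then g i j else 1) * (if j < i then g j i else 1) := by
    intro i j
    rcases lt_trichotomy i j with h | rfl | h
    · rw [if_pos h.ne, if_pos h, if_neg h.not_gt, mul_one]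
    · simp
    · rw [if_pos h.ne', if_neg h.not_gt, if_pos h, one_mul, hg]
  simp only [hsplit, Finset.prod_mul_distrib]
  rw [Finset.prod_comm (f := fun i j => if j < i then g j i else 1), sq]

section CompleteGraph

variable {n : ℕ}

lemma edgeOf_val {i j : Fin n} (h : i ≠ j) :
    (edgeOf i j h).1 = if i < j then (i, j) else (j, i) := by
  by_cases hij : i < j <;> simp [edgeOf, hij]

lemma edgeOf_comm {i j : Fin n} (h : i ≠ j) : edgeOf i j h = edgeOf j i h.symm := by
  apply Subtype.ext
  rw [edgeOf_val, edgeOf_val]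
  split_ifs <;> first | rfl | omega

lemma edgeOf_ne_edgeOf {i j k : Fin n} (hij : i ≠ j) (hjk : j ≠ k) (hik : i ≠ k) :
    edgeOf i j hij ≠ edgeOf j k hjk := by
  intro heq
  have := congrArg Subtype.val heq
  rw [edgeOf_val, edgeOf_val] at this
  split_ifs at this <;> simp only [Prod.mk.injEq] at this <;> omega

lemma dval_of_ne (d : EdgeType n → ℝ) {i j : Fin n} (h : i ≠ j) :
    dval d i j = d (edgeOf i j h) := dif_neg h

lemma dval_of_lt (d : EdgeType n → ℝ) {i j : Fin n} (h : i < j) :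
    dval d i j = d ⟨(i, j), h⟩ := by
  rw [dval_of_ne d h.ne]
  exact congrArg d (Subtype.ext ((edgeOf_val h.ne).trans (if_pos h)))

lemma dval_comm (d : EdgeType n → ℝ) (i j : Fin n) : dval d i j = dval d j i := by
  by_cases h : i = j
  · rw [h]
  · rw [dval_of_ne d h, dval_of_ne d (Ne.symm h), edgeOf_comm]

lemma prod_ite_lt_dval (f : EdgeType n → ℝ) :
    ∏ i, ∏ j, (if i < j then dval f i j else 1) = ∏ e, f e := by
  rw [← Fintype.prod_prod_type' (fun i j => if i < j then dval f i j else 1), ← Finset.prod_filter,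
    Finset.prod_subtype (p := fun q : Fin n × Fin n => q.1 < q.2) _ (fun _ => by simp)
      (fun q => dval f q.1 q.2)]
  exact Fintype.prod_congr _ _ fun e => dval_of_lt f e.2

lemma card_edgeType : Fintype.card (EdgeType n) = n.choose 2 := by
  rw [show Fintype.card (EdgeType n) = Fintype.card {p : Fin n × Fin n // p.1 < p.2} from rfl,
    Fintype.card_subtype, Fintype.card_product_filter_lt, Fintype.card_fin]

lemma dval_nonneg {D : EdgeType n → ℝ} (hD : ∀ e, 0 ≤ D e) (i j : Fin n) : 0 ≤ dval D i j := by
  unfold dval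
  split_ifs
  exacts [le_rfl, hD _]

lemma prodOrderedTriangles_dval (f : EdgeType n → ℝ) :
    prodOrderedTriangles (dval f) = (∏ e, f e) ^ (6 * (n - 2)) := by
  rw [prodOrderedTriangles_eq_pow, prod_ite_ne_eq_sq (dval_comm f), prod_ite_lt_dval,
    Fintype.card_fin, ← pow_mul]
  ring_nf

theorem prod_le_half_pow_of_triangle (hn : 3 ≤ n) {D : EdgeType n → ℝ} (hD : ∀ e, 0 ≤ D e)
    (htri : ∀ i j k : Fin n, i ≠ j → j ≠ k → k ≠ i →
      dval D i j * dval D j k * dval D k i ≤ 1 / 8) :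
    ∏ e, D e ≤ (1 / 2) ^ n.choose 2 := by
  -- For the constant `1/2` every triangle bound is an equality, so no triangle needs counting.
  have hcompare : prodOrderedTriangles (dval D) ≤ prodOrderedTriangles (dval fun _ => 1 / 2) :=
    prodOrderedTriangles_le (dval_nonneg hD) fun i j k hij hjk hki =>
      (htri i j k hij hjk hki).trans_eq <| by
        rw [dval_of_ne _ hij, dval_of_ne _ hjk, dval_of_ne _ hki]
        norm_num
  rwa [prodOrderedTriangles_dval, prodOrderedTriangles_dval,
    pow_le_pow_iff_left₀ (Finset.prod_nonneg fun e _ => hD e) (by positivity) (by omega),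
    Finset.prod_const, Finset.card_univ, card_edgeType] at hcompare

end CompleteGraph

section MetricPolytope

variable {n : ℕ}

lemma le_add_of_mem_metricPolytope {d : EdgeType n → ℝ} (hd : d ∈ metricPolytope n) {i j k : Fin n}
    (hij : i ≠ j) (hjk : j ≠ k) (hki : k ≠ i) :
    d (edgeOf i j hij) ≤ d (edgeOf j k hjk) + d (edgeOf k i hki) := by
  have := hd.2 i j k hij hjk hki.symm
  rwa [dval_of_ne d hij, dval_of_ne d hki.symm, dval_of_ne d hjk.symm, edgeOf_comm hki.symm,
    edgeOf_comm hjk.symm, add_comm] at this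

lemma essSup_edgeOf_le {A : EdgeType n → Set ℝ} (hA : ∀ e, A e ⊆ Icc 0 1)
    (h0 : ∀ e, volume (A e) ≠ 0) (hnull : volume (univ.pi A \ metricPolytope n) = 0)
    {i j k : Fin n} (hij : i ≠ j) (hjk : j ≠ k) (hki : k ≠ i) :
    essSup id (volume.restrict (A (edgeOf i j hij))) ≤
      essInf id (volume.restrict (A (edgeOf j k hjk))) +
        essInf id (volume.restrict (A (edgeOf k i hki))) := by
  refine essSup_le_essInf_add_essInf_of_pi_ae_subset hA h0 hnull (edgeOf_ne_edgeOf hij hjk hki.symm)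
    ?_ (edgeOf_ne_edgeOf hjk hki hij.symm) fun d hd => le_add_of_mem_metricPolytope hd hij hjk hki
  rw [edgeOf_comm hij, edgeOf_comm hki]
  exact edgeOf_ne_edgeOf hij.symm hki.symm hjk

theorem volume_pi_le_of_pi_ae_subset_metricPolytope (hn : 3 ≤ n) {A : EdgeType n → Set ℝ}
    (hA : ∀ e, A e ⊆ Icc 0 1) (hnull : volume (univ.pi A \ metricPolytope n) = 0) :
    volume (univ.pi A) ≤ ENNReal.ofReal ((1 / 2) ^ n.choose 2) := by
  rw [volume_pi_pi]
  by_cases hz : ∃ e, volume (A e) = 0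
  · obtain ⟨e, he⟩ := hz
    rw [Finset.prod_eq_zero (Finset.mem_univ e) he]
    exact zero_le
  push Not at hz
  set lo : EdgeType n → ℝ := fun e => essInf id (volume.restrict (A e))
  set hi : EdgeType n → ℝ := fun e => essSup id (volume.restrict (A e))
  have hvol : ∀ e, volume (A e) ≤ ENNReal.ofReal (hi e - lo e) :=
    fun e => volume_le_essSup_sub_essInf (hA e)
  have hlo : ∀ e, lo e ≤ hi e := fun e => by
    by_contra! h
    exact hz e (le_zero_iff.1 ((hvol e).trans_eq (ENNReal.ofReal_eq_zero.2 (by linarith))))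
  have htri : ∀ i j k : Fin n, i ≠ j → j ≠ k → k ≠ i →
      dval (hi - lo) i j * dval (hi - lo) j k * dval (hi - lo) k i ≤ 1 / 8 := by
    intro i j k hij hjk hki
    rw [dval_of_ne _ hij, dval_of_ne _ hjk, dval_of_ne _ hki]
    exact sub_mul_sub_mul_sub_le_one_div_eight (hlo _) (hlo _) (hlo _)
      (essSup_id_restrict_le (hA _) (hz _)) (essSup_id_restrict_le (hA _) (hz _)) (essSup_id_restrict_le (hA _) (hz _))
      (essSup_edgeOf_le hA hz hnull hij hjk hki) (essSup_edgeOf_le hA hz hnull hjk hki hij)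
      (essSup_edgeOf_le hA hz hnull hki hij hjk)
  calc ∏ e, volume (A e) ≤ ∏ e, ENNReal.ofReal (hi e - lo e) :=
        Finset.prod_le_prod' fun e _ => hvol e
    _ = ENNReal.ofReal (∏ e, (hi e - lo e)) :=
      (ENNReal.ofReal_prod_of_nonneg fun e _ => sub_nonneg.2 (hlo e)).symm
    _ ≤ ENNReal.ofReal ((1 / 2) ^ n.choose 2) := ENNReal.ofReal_le_ofReal
      (prod_le_half_pow_of_triangle hn (fun e => sub_nonneg.2 (hlo e)) htri)

lemma pi_Icc_half_one_subset_metricPolytope :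
    univ.pi (fun _ : EdgeType n => Icc (1 / 2 : ℝ) 1) ⊆ metricPolytope n := by
  intro d hd
  have hval : ∀ i j, i ≠ j → dval d i j ∈ Icc (1 / 2 : ℝ) 1 := fun i j h => by
    rw [dval_of_ne d h]
    exact hd _ trivial
  refine ⟨fun e => ⟨by linarith [(hd e trivial).1], (hd e trivial).2⟩, fun i j k hij hjk hik => ?_⟩
  linarith [(hval i j hij).2, (hval i k hik).1, (hval k j hjk.symm).1]

lemma volume_pi_Icc_half_one :
    volume (univ.pi fun _ : EdgeType n => Icc (1 / 2 : ℝ) 1) =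
      ENNReal.ofReal ((1 / 2) ^ n.choose 2) := by
  rw [volume_pi_pi, Real.volume_Icc, Finset.prod_const, Finset.card_univ, card_edgeType,
    ENNReal.ofReal_pow (by norm_num)]
  norm_num

end MetricPolytope

/-- **Theorem (extremal entropy of the metric polytope).**
For `n ≥ 3`, `ex(E(K_n), M_n) = C(n,2) log 2`: every box `b` with `vol(b \ M_n) = 0`
has `vol(b) ≤ 2^{-C(n,2)}`, and the box `[1/2,1]^{E(K_n)}` is contained in `M_n` and
has volume exactly `2^{-C(n,2)}`. -/
theorem extremal_entropy_metric_polytope (n : ℕ) (hn : 3 ≤ n) :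
    (∀ b : Set (EdgeType n → ℝ), IsBox b → volume (b \ metricPolytope n) = 0 →
      volume b ≤ ENNReal.ofReal ((1 / 2 : ℝ) ^ (n.choose 2))) ∧
    (Set.univ.pi (fun _ : EdgeType n => Set.Icc (1/2 : ℝ) 1) ⊆ metricPolytope n) ∧
    volume (Set.univ.pi (fun _ : EdgeType n => Set.Icc (1/2 : ℝ) 1)) =
      ENNReal.ofReal ((1 / 2 : ℝ) ^ (n.choose 2)) := by
  refine ⟨?_, pi_Icc_half_one_subset_metricPolytope, volume_pi_Icc_half_one⟩
  rintro b ⟨A, hA, rfl⟩ hnull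
  exact volume_pi_le_of_pi_ae_subset_metricPolytope hn (fun e => (hA e).2) hnull

end
end

section
/- Let I₁, I₂, I₃ ⊆ [0,1] each be a nonempty finite union of intervals, and suppose that the set of triples (x₁,x₂,x₃) ∈ I₁ × I₂ × I₃ that fail one of the three triangle inequalities x₁ ≤ x₂ + x₃, x₂ ≤ x₁ + x₃, x₃ ≤ x₁ + x₂ has Lebesgue measure zero. Then λ(I₁)·λ(I₂)·λ(I₃) ≤ 1/8. -/
/-!
Let `aᵢ ≤ bᵢ` be the essential infimum and supremum of `Iᵢ`, so that `λ(Iᵢ) ≤ bᵢ - aᵢ`.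
Points of `I₁` near `b₁`, of `I₂` near `a₂` and of `I₃` near `a₃` form a box of positive
measure, so one of them satisfies `x₁ ≤ x₂ + x₃`; hence `b₁ ≤ a₂ + a₃`, and symmetrically
for the other two indices. Adding up, `∑ (bᵢ - aᵢ) ≤ (∑ bᵢ) / 2 ≤ 3 / 2`, and AM-GM bounds
the product of the `bᵢ - aᵢ` by `(1 / 2) ^ 3`.
-/

open MeasureTheory Set Filter

section EssentialBounds

variable {μ : Measure ℝ} {I : Set ℝ} {c d t : ℝ}

lemma ae_restrict_mem_Icc_of_subset_s11 (hI : I ⊆ Icc c d) : ∀ᵐ x ∂μ.restrict I, x ∈ Icc c d :=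
  ae_restrict_of_ae_restrict_of_subset hI (ae_restrict_mem measurableSet_Icc)

lemma ae_restrict_mem_Icc_essInf_essSup (hI : I ⊆ Icc c d) :
    ∀ᵐ x ∂μ.restrict I, x ∈ Icc (essInf id (μ.restrict I)) (essSup id (μ.restrict I)) :=
  have h := ae_restrict_mem_Icc_of_subset_s11 (μ := μ) hI
  (ae_essInf_le (isBoundedUnder_of_eventually_ge (h.mono fun _ hx => hx.1))).and
    (ae_le_essSup (isBoundedUnder_of_eventually_le (h.mono fun _ hx => hx.2)))

lemma essInf_le_essSup_restrict (hI : I ⊆ Icc c d) (hμI : μ I ≠ 0) :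
    essInf id (μ.restrict I) ≤ essSup id (μ.restrict I) :=
  have : NeZero (μ.restrict I) := ⟨by rwa [Ne, Measure.restrict_eq_zero]⟩
  let ⟨_, hx⟩ := (ae_restrict_mem_Icc_essInf_essSup hI).exists
  hx.1.trans hx.2

lemma essSup_restrict_le (hI : I ⊆ Icc c d) (hμI : μ I ≠ 0) : essSup id (μ.restrict I) ≤ d :=
  have : NeZero (μ.restrict I) := ⟨by rwa [Ne, Measure.restrict_eq_zero]⟩
  have h := ae_restrict_mem_Icc_of_subset_s11 (μ := μ) hI
  essSup_le_of_ae_le d (h.mono fun _ hx => hx.2)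
    (isCoboundedUnder_le_of_eventually_le _ (h.mono fun _ hx => hx.1))

lemma measure_Iio_inter_ne_zero_of_essInf_lt (hI : I ⊆ Icc c d) (hμI : μ I ≠ 0)
    (ht : essInf id (μ.restrict I) < t) : μ (Iio t ∩ I) ≠ 0 := fun hnull =>
  have : NeZero (μ.restrict I) := ⟨by rwa [Ne, Measure.restrict_eq_zero]⟩
  have hge : ∀ᵐ x ∂μ.restrict I, t ≤ id x := ae_iff.2 <| by
    simp only [id, not_le]
    exact (Measure.restrict_apply measurableSet_Iio).trans hnull
  ht.not_ge <| le_essInf_of_ae_le t hge <| isCoboundedUnder_ge_of_eventually_le _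
    ((ae_restrict_mem_Icc_of_subset_s11 hI).mono fun _ hx => hx.2)

lemma measure_Ioi_inter_ne_zero_of_lt_essSup (hI : I ⊆ Icc c d) (hμI : μ I ≠ 0)
    (ht : t < essSup id (μ.restrict I)) : μ (Ioi t ∩ I) ≠ 0 := fun hnull =>
  have : NeZero (μ.restrict I) := ⟨by rwa [Ne, Measure.restrict_eq_zero]⟩
  have hle : ∀ᵐ x ∂μ.restrict I, id x ≤ t := ae_iff.2 <| by
    simp only [id, not_le]
    exact (Measure.restrict_apply measurableSet_Ioi).trans hnull
  ht.not_ge <| essSup_le_of_ae_le t hle <| isCoboundedUnder_le_of_eventually_le _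
    ((ae_restrict_mem_Icc_of_subset_s11 hI).mono fun _ hx => hx.1)

end EssentialBounds

lemma volume_le_ofReal_essSup_sub_essInf {I : Set ℝ} {c d : ℝ} (hI : I ⊆ Icc c d) :
    volume I ≤ ENNReal.ofReal
      (essSup id (volume.restrict I) - essInf id (volume.restrict I)) :=
  calc volume I = volume.restrict I univ := by rw [Measure.restrict_apply_univ]
    _ ≤ volume.restrict I (Icc (essInf id (volume.restrict I)) (essSup id (volume.restrict I))) :=
      measure_mono_ae ((ae_restrict_mem_Icc_essInf_essSup hI).mono fun _ hx _ => hx)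
    _ ≤ _ := (Measure.restrict_apply_le _ _).trans_eq Real.volume_Icc

lemma exists_mem_of_volume_setOf_not_eq_zero {A B C X Y Z : Set ℝ} {P : ℝ → ℝ → ℝ → Prop}
    (h : volume {p : ℝ × ℝ × ℝ | p.1 ∈ A ∧ p.2.1 ∈ B ∧ p.2.2 ∈ C ∧ ¬P p.1 p.2.1 p.2.2} = 0)
    (hX : volume (X ∩ A) ≠ 0) (hY : volume (Y ∩ B) ≠ 0) (hZ : volume (Z ∩ C) ≠ 0) :
    ∃ x ∈ X, ∃ y ∈ Y, ∃ z ∈ Z, P x y z := by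
  by_contra! hP
  have hbox : (X ∩ A) ×ˢ (Y ∩ B) ×ˢ (Z ∩ C) ⊆
      {p : ℝ × ℝ × ℝ | p.1 ∈ A ∧ p.2.1 ∈ B ∧ p.2.2 ∈ C ∧ ¬P p.1 p.2.1 p.2.2} := by
    rintro ⟨x, y, z⟩ ⟨⟨hxX, hxA⟩, ⟨hyY, hyB⟩, hzZ, hzC⟩
    exact ⟨hxA, hyB, hzC, hP x hxX y hyY z hzZ⟩
  have hnull := measure_mono_null hbox h
  rw [Measure.volume_eq_prod, Measure.prod_prod, Measure.volume_eq_prod, Measure.prod_prod]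
    at hnull
  exact mul_ne_zero hX (mul_ne_zero hY hZ) hnull

lemma essSup_le_essInf_add_essInf_of_triangle {I₁ I₂ I₃ : Set ℝ} {c d : ℝ}
    (hs₁ : I₁ ⊆ Icc c d) (hs₂ : I₂ ⊆ Icc c d) (hs₃ : I₃ ⊆ Icc c d)
    (hv₁ : volume I₁ ≠ 0) (hv₂ : volume I₂ ≠ 0) (hv₃ : volume I₃ ≠ 0)
    (h0 : volume {p : ℝ × ℝ × ℝ | p.1 ∈ I₁ ∧ p.2.1 ∈ I₂ ∧ p.2.2 ∈ I₃ ∧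
      ¬(p.1 ≤ p.2.1 + p.2.2 ∧ p.2.1 ≤ p.1 + p.2.2 ∧ p.2.2 ≤ p.1 + p.2.1)} = 0) :
    essSup id (volume.restrict I₁) ≤
        essInf id (volume.restrict I₂) + essInf id (volume.restrict I₃) ∧
      essSup id (volume.restrict I₂) ≤
        essInf id (volume.restrict I₁) + essInf id (volume.restrict I₃) ∧
      essSup id (volume.restrict I₃) ≤
        essInf id (volume.restrict I₁) + essInf id (volume.restrict I₂) := by
  have low {I : Set ℝ} (hI : I ⊆ Icc c d) (hv : volume I ≠ 0) {ε : ℝ} (hε : 0 < ε) :=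
    measure_Iio_inter_ne_zero_of_essInf_lt hI hv (lt_add_of_pos_right _ (div_pos hε three_pos))
  have high {I : Set ℝ} (hI : I ⊆ Icc c d) (hv : volume I ≠ 0) {ε : ℝ} (hε : 0 < ε) :=
    measure_Ioi_inter_ne_zero_of_lt_essSup hI hv (sub_lt_self _ (div_pos hε three_pos))
  have box {X Y Z : Set ℝ} := exists_mem_of_volume_setOf_not_eq_zero (X := X) (Y := Y) (Z := Z)
    (P := fun x y z => x ≤ y + z ∧ y ≤ x + z ∧ z ≤ x + y) h0
  refine ⟨le_of_forall_pos_lt_add fun ε hε => ?_, le_of_forall_pos_lt_add fun ε hε => ?_,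
    le_of_forall_pos_lt_add fun ε hε => ?_⟩
  · obtain ⟨x, hx, y, hy, z, hz, h, -, -⟩ :=
      box (high hs₁ hv₁ hε) (low hs₂ hv₂ hε) (low hs₃ hv₃ hε)
    simp only [mem_Ioi, mem_Iio] at hx hy hz
    linarith
  · obtain ⟨x, hx, y, hy, z, hz, -, h, -⟩ :=
      box (low hs₁ hv₁ hε) (high hs₂ hv₂ hε) (low hs₃ hv₃ hε)
    simp only [mem_Ioi, mem_Iio] at hx hy hz
    linarith
  · obtain ⟨x, hx, y, hy, z, hz, -, -, h⟩ :=
      box (low hs₁ hv₁ hε) (low hs₂ hv₂ hε) (high hs₃ hv₃ hε)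
    simp only [mem_Ioi, mem_Iio] at hx hy hz
    linarith

lemma mul_mul_le_add_add_div_three_pow_three {x y z : ℝ} (hx : 0 ≤ x) (hy : 0 ≤ y)
    (hz : 0 ≤ z) : x * y * z ≤ ((x + y + z) / 3) ^ 3 := by
  nlinarith [mul_nonneg (add_nonneg (add_nonneg hx hy) hz) (add_nonneg (add_nonneg
    (sq_nonneg (x - y)) (sq_nonneg (y - z))) (sq_nonneg (x - z))), mul_nonneg hx (sq_nonneg (y - z)),
    mul_nonneg hy (sq_nonneg (x - z)), mul_nonneg hz (sq_nonneg (x - y))]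

lemma sub_mul_sub_mul_sub_le_one_div_eight_s11 {a₁ a₂ a₃ b₁ b₂ b₃ : ℝ}
    (hab₁ : a₁ ≤ b₁) (hab₂ : a₂ ≤ b₂) (hab₃ : a₃ ≤ b₃) (hb₁ : b₁ ≤ 1) (hb₂ : b₂ ≤ 1) (hb₃ : b₃ ≤ 1)
    (h₁ : b₁ ≤ a₂ + a₃) (h₂ : b₂ ≤ a₁ + a₃) (h₃ : b₃ ≤ a₁ + a₂) :
    (b₁ - a₁) * (b₂ - a₂) * (b₃ - a₃) ≤ 1 / 8 :=
  calc (b₁ - a₁) * (b₂ - a₂) * (b₃ - a₃)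
      ≤ (((b₁ - a₁) + (b₂ - a₂) + (b₃ - a₃)) / 3) ^ 3 :=
        mul_mul_le_add_add_div_three_pow_three (by linarith) (by linarith) (by linarith)
    _ ≤ (1 / 2) ^ 3 := pow_le_pow_left₀ (by linarith) (by linarith) 3
    _ = 1 / 8 := by norm_num

theorem triangle_box_volume_le_general
    (I₁ I₂ I₃ : Set ℝ)
    (hs₁ : I₁ ⊆ Set.Icc 0 1) (hs₂ : I₂ ⊆ Set.Icc 0 1) (hs₃ : I₃ ⊆ Set.Icc 0 1)
    (h0 : volume {p : ℝ × ℝ × ℝ | p.1 ∈ I₁ ∧ p.2.1 ∈ I₂ ∧ p.2.2 ∈ I₃ ∧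
      ¬(p.1 ≤ p.2.1 + p.2.2 ∧ p.2.1 ≤ p.1 + p.2.2 ∧ p.2.2 ≤ p.1 + p.2.1)} = 0) :
    volume I₁ * volume I₂ * volume I₃ ≤ ENNReal.ofReal (1 / 8) := by
  by_cases hnull : volume I₁ = 0 ∨ volume I₂ = 0 ∨ volume I₃ = 0
  · rcases hnull with h | h | h <;> simp [h]
  obtain ⟨hv₁, hv₂, hv₃⟩ : volume I₁ ≠ 0 ∧ volume I₂ ≠ 0 ∧ volume I₃ ≠ 0 := by tauto
  obtain ⟨ht₁, ht₂, ht₃⟩ := essSup_le_essInf_add_essInf_of_triangle hs₁ hs₂ hs₃ hv₁ hv₂ hv₃ h0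
  have hab₁ := essInf_le_essSup_restrict hs₁ hv₁
  have hab₂ := essInf_le_essSup_restrict hs₂ hv₂
  have hab₃ := essInf_le_essSup_restrict hs₃ hv₃
  set a₁ := essInf id (volume.restrict I₁)
  set a₂ := essInf id (volume.restrict I₂)
  set a₃ := essInf id (volume.restrict I₃)
  set b₁ := essSup id (volume.restrict I₁)
  set b₂ := essSup id (volume.restrict I₂)
  set b₃ := essSup id (volume.restrict I₃)
  calc volume I₁ * volume I₂ * volume I₃
      ≤ ENNReal.ofReal (b₁ - a₁) * ENNReal.ofReal (b₂ - a₂) * ENNReal.ofReal (b₃ - a₃) := by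
        gcongr <;> exact volume_le_ofReal_essSup_sub_essInf ‹_›
    _ = ENNReal.ofReal ((b₁ - a₁) * (b₂ - a₂) * (b₃ - a₃)) := by
        rw [ENNReal.ofReal_mul (mul_nonneg (sub_nonneg.2 hab₁) (sub_nonneg.2 hab₂)),
          ENNReal.ofReal_mul (sub_nonneg.2 hab₁)]
    _ ≤ ENNReal.ofReal (1 / 8) := ENNReal.ofReal_le_ofReal <|
        sub_mul_sub_mul_sub_le_one_div_eight_s11 hab₁ hab₂ hab₃
          (essSup_restrict_le hs₁ hv₁) (essSup_restrict_le hs₂ hv₂) (essSup_restrict_le hs₃ hv₃)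
          ht₁ ht₂ ht₃

/-- **Lemma (triangle-inequality boxes have volume at most 1/8).**
If `I₁, I₂, I₃ ⊆ [0,1]` are nonempty finite unions of intervals and almost every
triple in `I₁ × I₂ × I₃` satisfies all three triangle inequalities, then
`λ(I₁)·λ(I₂)·λ(I₃) ≤ 1/8`. -/
theorem triangle_box_volume_le
    (I₁ I₂ I₃ : Set ℝ)
    (h₁ : I₁.Nonempty) (h₂ : I₂.Nonempty) (h₃ : I₃.Nonempty)
    (hs₁ : I₁ ⊆ Set.Icc 0 1) (hs₂ : I₂ ⊆ Set.Icc 0 1) (hs₃ : I₃ ⊆ Set.Icc 0 1)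
    (hu₁ : ∃ s : Finset (Set ℝ), (∀ J ∈ s, J.OrdConnected) ∧ I₁ = ⋃₀ ↑s)
    (hu₂ : ∃ s : Finset (Set ℝ), (∀ J ∈ s, J.OrdConnected) ∧ I₂ = ⋃₀ ↑s)
    (hu₃ : ∃ s : Finset (Set ℝ), (∀ J ∈ s, J.OrdConnected) ∧ I₃ = ⋃₀ ↑s)
    (h0 : volume {p : ℝ × ℝ × ℝ | p.1 ∈ I₁ ∧ p.2.1 ∈ I₂ ∧ p.2.2 ∈ I₃ ∧
      ¬(p.1 ≤ p.2.1 + p.2.2 ∧ p.2.1 ≤ p.1 + p.2.2 ∧ p.2.2 ≤ p.1 + p.2.1)} = 0) :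
    volume I₁ * volume I₂ * volume I₃ ≤ ENNReal.ofReal (1 / 8) :=
  triangle_box_volume_le_general I₁ I₂ I₃ hs₁ hs₂ hs₃ h0
end

section
/- Let Q_n := {0,1}^n and, for N ≤ n, let binom(Q_n, Q_N) be the collection of maps φ_{u,S} : Q_N → Q_n indexed by u ∈ {0,1}^n and sets S = {s_1 < s_2 < … < s_N} ⊆ [n], where φ_{u,S}(v)_i = v_j if i = s_j and φ_{u,S}(v)_i = u_i otherwise. Then every φ_{u,S} is injective, and this data constitutes a good homogeneous ssee; in particular: (i) |Q_n| → ∞; (ii) for every N ≥ 1, |binom(Q_n,Q_N)|/|Q_n| → ∞; (iii) for every N ≥ 1, |Q_n|·I(N,n)/|binom(Q_n,Q_N)|² → 0 as n → ∞; and for every n ≥ N, every x ∈ Q_n is contained in the same strictly positive number of images φ(Q_N) over φ ∈ binom(Q_n,Q_N). -/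
open Filter Set

noncomputable section

/-- The count `I(N,n)` specialised to a finset `E` of maps `α → β`: the number of
pairs of maps in `E` whose images intersect in exactly `i` elements, summed over
`1 < i < |α|`. -/
def interCountF {α β : Type} [Fintype α] [DecidableEq β] (E : Finset (α → β)) : ℕ :=
  ((E ×ˢ E).filter (fun p =>
    1 < ((Finset.univ.image p.1) ∩ (Finset.univ.image p.2)).card ∧
    ((Finset.univ.image p.1) ∩ (Finset.univ.image p.2)).card < Fintype.card α)).card

/-- The embedding `φ_{u,S} : Q_N → Q_n` determined by a base point `u ∈ {0,1}^n` and
a coordinate set `S ⊆ [n]` with `|S| = N`: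
`φ_{u,S}(v)_i = v_j` if `i = s_j` (the `j`-th smallest element of `S`), else `u_i`. -/
def cubeEmb {N n : ℕ} (u : Fin n → Bool) (S : Finset (Fin n)) (hS : S.card = N) :
    (Fin N → Bool) → (Fin n → Bool) :=
  fun v i => if h : i ∈ S then v ((S.orderIsoOfFin hS).symm ⟨i, h⟩) else u i

/-- The collection of embeddings `binom(Q_n, Q_N)`. -/
def cubeEmbs (N n : ℕ) : Finset ((Fin N → Bool) → (Fin n → Bool)) :=
  (((Finset.univ : Finset (Fin n)).powersetCard N).attach ×ˢ
      (Finset.univ : Finset (Fin n → Bool))).image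
    (fun p => cubeEmb p.2 p.1.1 (Finset.mem_powersetCard.mp p.1.2).2)

/-!
The image of `φ_{u,S}` is the subcube of points that agree with `u` off `S`, and `φ_{u,S}` is
determined by `S` together with `u` off `S`. Every point lies in exactly one such subcube for each
`S`, so double counting incidences gives `|binom(Q_n,Q_N)| · 2^N = C(n,N) · 2^n`.
Two subcubes whose coordinate sets are disjoint meet in at most one point. Hence, for a pair
counted by `I(N,n)`, the set `S₂` meets `S₁` (at most `N · C(n-1,N-1)` choices), and `φ₂` is
then determined by `S₂` and its base point on `S₁`. This gives
`I(N,n) ≤ |binom(Q_n,Q_N)| · N · C(n-1,N-1) · 2^N`, and since `n · C(n-1,N-1) = N · C(n,N)`,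
the ratio in (iii) is at most `N² 2^(2N) / n`.
-/

open Finset

lemma Nat.mul_choose_sub_one (n : ℕ) {k : ℕ} (hk : 1 ≤ k) :
    n * (n - 1).choose (k - 1) = n.choose k * k := by
  obtain ⟨k, rfl⟩ := Nat.exists_eq_add_of_le' hk
  rcases n with _ | n
  · simp
  · simpa using Nat.add_one_mul_choose_eq n k

lemma Finset.card_filter_product_le {α β : Type*} {s : Finset α} {t : Finset β}
    {r : α → β → Prop} [DecidableRel r] {m : ℕ}
    (h : ∀ a ∈ s, #{b ∈ t | r a b} ≤ m) :
    #{p ∈ s ×ˢ t | r p.1 p.2} ≤ #s * m := by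
  rw [card_filter, sum_product]
  simp_rw [← card_filter]
  exact sum_le_card_nsmul _ _ _ h

lemma Finset.card_filter_not_disjoint_powersetCard_le {α : Type*} [Fintype α] [DecidableEq α]
    (A : Finset α) (k : ℕ) :
    #{S ∈ powersetCard k (Finset.univ : Finset α) | ¬Disjoint A S}
      ≤ #A * (Fintype.card α - 1).choose (k - 1) := by
  rcases k with _ | k
  · simp [powersetCard_zero, filter_singleton]
  calc _ ≤ #(A.biUnion fun i =>
          {S ∈ powersetCard (k + 1) (Finset.univ : Finset α) | {i} ⊆ S}) := by
        refine card_le_card fun S hS => ?_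
        obtain ⟨hS, hAS⟩ := mem_filter.1 hS
        obtain ⟨i, hiA, hiS⟩ := not_disjoint_iff.1 hAS
        exact mem_biUnion.2 ⟨i, hiA, mem_filter.2 ⟨hS, singleton_subset_iff.2 hiS⟩⟩
    _ ≤ _ := card_biUnion_le_card_mul _ _ _ fun i _ => by
        rw [card_filter_powersetCard_subset _ _ _ (subset_univ _) (by simp)]
        simp

section CubeEmbeddings

variable {N n : ℕ}

lemma cubeEmb_apply_of_mem (u : Fin n → Bool) {S : Finset (Fin n)} (hS : S.card = N)
    (v : Fin N → Bool) {i : Fin n} (h : i ∈ S) :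
    cubeEmb u S hS v i = v ((S.orderIsoOfFin hS).symm ⟨i, h⟩) := dif_pos h

lemma cubeEmb_apply_of_notMem (u : Fin n → Bool) {S : Finset (Fin n)} (hS : S.card = N)
    (v : Fin N → Bool) {i : Fin n} (h : i ∉ S) : cubeEmb u S hS v i = u i := dif_neg h

lemma cubeEmb_const_apply (u : Fin n → Bool) {S : Finset (Fin n)} (hS : S.card = N)
    (b : Bool) (i : Fin n) : cubeEmb u S hS (fun _ => b) i = if i ∈ S then b else u i := by
  unfold cubeEmb
  split_ifs <;> rfl

lemma cubeEmb_injective (u : Fin n → Bool) {S : Finset (Fin n)} (hS : S.card = N) :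
    Function.Injective (cubeEmb u S hS) := by
  intro v w h
  funext j
  have hj := congrFun h (S.orderIsoOfFin hS j)
  rwa [cubeEmb_apply_of_mem u hS v (S.orderIsoOfFin hS j).2,
    cubeEmb_apply_of_mem u hS w (S.orderIsoOfFin hS j).2, Subtype.coe_eta,
    OrderIso.symm_apply_apply] at hj

def freeCoords (φ : (Fin N → Bool) → Fin n → Bool) : Finset (Fin n) :=
  {i | φ (fun _ => true) i ≠ φ (fun _ => false) i}

lemma freeCoords_cubeEmb (u : Fin n → Bool) {S : Finset (Fin n)} (hS : S.card = N) :
    freeCoords (cubeEmb u S hS) = S := by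
  ext i
  by_cases hi : i ∈ S <;> simp [freeCoords, cubeEmb_const_apply, hi]

lemma cubeEmb_eq_cubeEmb_iff {u u' : Fin n → Bool} {S S' : Finset (Fin n)} (hS : S.card = N)
    (hS' : S'.card = N) :
    cubeEmb u S hS = cubeEmb u' S' hS' ↔ S = S' ∧ ∀ i ∉ S, u i = u' i := by
  constructor
  · intro h
    have hSS' : S = S' := by
      rw [← freeCoords_cubeEmb u hS, ← freeCoords_cubeEmb u' hS', h]
    refine ⟨hSS', fun i hi => ?_⟩
    have hi' := congrFun (congrFun h fun _ => false) i
    rwa [cubeEmb_apply_of_notMem _ _ _ hi, cubeEmb_apply_of_notMem _ _ _ (hSS' ▸ hi)] at hi'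
  · rintro ⟨rfl, h⟩
    funext v i
    by_cases hi : i ∈ S
    · rw [cubeEmb_apply_of_mem _ _ _ hi, cubeEmb_apply_of_mem _ _ _ hi]
    · rw [cubeEmb_apply_of_notMem _ _ _ hi, cubeEmb_apply_of_notMem _ _ _ hi, h i hi]

lemma mem_image_cubeEmb {u x : Fin n → Bool} {S : Finset (Fin n)} (hS : S.card = N) :
    x ∈ Finset.univ.image (cubeEmb u S hS) ↔ ∀ i ∉ S, x i = u i := by
  simp only [Finset.mem_image, Finset.mem_univ, true_and]
  constructor
  · rintro ⟨v, rfl⟩ i hi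
    exact cubeEmb_apply_of_notMem _ _ _ hi
  · intro hx
    refine ⟨fun j => x (S.orderIsoOfFin hS j), funext fun i => ?_⟩
    by_cases hi : i ∈ S
    · rw [cubeEmb_apply_of_mem _ _ _ hi, OrderIso.apply_symm_apply]
    · rw [cubeEmb_apply_of_notMem _ _ _ hi, hx i hi]

lemma cubeEmb_eq_of_mem_image {u x : Fin n → Bool} {S : Finset (Fin n)} (hS : S.card = N)
    (hx : x ∈ Finset.univ.image (cubeEmb u S hS)) : cubeEmb x S hS = cubeEmb u S hS :=
  (cubeEmb_eq_cubeEmb_iff hS hS).2 ⟨rfl, (mem_image_cubeEmb hS).1 hx⟩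

lemma card_image_inter_image_cubeEmb_le_one {u u' : Fin n → Bool} {S S' : Finset (Fin n)}
    (hS : S.card = N) (hS' : S'.card = N) (h : Disjoint S S') :
    #(Finset.univ.image (cubeEmb u S hS) ∩ Finset.univ.image (cubeEmb u' S' hS')) ≤ 1 := by
  refine card_le_one.2 fun x hx y hy => funext fun i => ?_
  simp only [Finset.mem_inter, mem_image_cubeEmb] at hx hy
  by_cases hi : i ∈ S
  · have hi' : i ∉ S' := disjoint_left.1 h hi
    rw [hx.2 i hi', hy.2 i hi']
  · rw [hx.1 i hi, hy.1 i hi]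

lemma mem_cubeEmbs {φ : (Fin N → Bool) → Fin n → Bool} :
    φ ∈ cubeEmbs N n ↔ ∃ (S : Finset (Fin n)) (hS : S.card = N) (u : Fin n → Bool),
      cubeEmb u S hS = φ := by
  simp [cubeEmbs]

lemma cubeEmb_mem_cubeEmbs (u : Fin n → Bool) {S : Finset (Fin n)} (hS : S.card = N) :
    cubeEmb u S hS ∈ cubeEmbs N n :=
  mem_cubeEmbs.2 ⟨S, hS, u, rfl⟩

end CubeEmbeddings

section Counting

variable {N n : ℕ}

lemma card_filter_mem_range_cubeEmbs (x : Fin n → Bool) :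
    #{φ ∈ cubeEmbs N n | ∃ v, φ v = x} = n.choose N := by
  have hx : ∀ φ : (Fin N → Bool) → Fin n → Bool,
      (∃ v, φ v = x) ↔ x ∈ Finset.univ.image φ := by
    simp
  simp_rw [hx]
  have hP : #(powersetCard N (Finset.univ : Finset (Fin n))) = n.choose N := by simp
  rw [← hP]
  symm
  refine card_bij (fun S hS => cubeEmb x S (mem_powersetCard.1 hS).2) ?_ ?_ ?_
  · intro S hS
    exact mem_filter.2 ⟨cubeEmb_mem_cubeEmbs _ _, (mem_image_cubeEmb _).2 fun _ _ => rfl⟩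
  · intro S hS S' hS' h
    exact ((cubeEmb_eq_cubeEmb_iff _ _).1 h).1
  · intro φ hφ
    obtain ⟨hφ, hxφ⟩ := mem_filter.1 hφ
    obtain ⟨S, hS, u, rfl⟩ := mem_cubeEmbs.1 hφ
    exact ⟨S, mem_powersetCard.2 ⟨subset_univ S, hS⟩, cubeEmb_eq_of_mem_image hS hxφ⟩

lemma card_cubeEmbs_mul_two_pow : #(cubeEmbs N n) * 2 ^ N = n.choose N * 2 ^ n := by
  have h := sum_card_bipartiteAbove_eq_sum_card_bipartiteBelow
    (s := cubeEmbs N n) (t := Finset.univ) (fun φ x => ∃ v, φ v = x)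
  have hrange : ∀ φ ∈ cubeEmbs N n,
      #((Finset.univ : Finset (Fin n → Bool)).bipartiteAbove (fun φ x => ∃ v, φ v = x) φ)
        = 2 ^ N := by
    intro φ hφ
    obtain ⟨S, hS, u, rfl⟩ := mem_cubeEmbs.1 hφ
    have : (Finset.univ : Finset (Fin n → Bool)).bipartiteAbove (fun φ x => ∃ v, φ v = x)
        (cubeEmb u S hS) = Finset.univ.image (cubeEmb u S hS) := by
      ext x
      simp [bipartiteAbove]
    rw [this, card_image_of_injective _ (cubeEmb_injective u hS)]
    simp
  have hcover : ∀ x ∈ (Finset.univ : Finset (Fin n → Bool)),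
      #((cubeEmbs N n).bipartiteBelow (fun φ x => ∃ v, φ v = x) x) = n.choose N :=
    fun x _ => card_filter_mem_range_cubeEmbs x
  rw [sum_congr rfl hrange, sum_congr rfl hcover] at h
  simpa [mul_comm] using h

end Counting

section Intersections

variable {N n : ℕ}

lemma cubeEmb_eq_of_meet {u₁ u₂ u₂' x x' : Fin n → Bool} {S₁ S₂ : Finset (Fin n)}
    (hS₁ : S₁.card = N) (hS₂ : S₂.card = N)
    (hx : x ∈ Finset.univ.image (cubeEmb u₁ S₁ hS₁) ∩
      Finset.univ.image (cubeEmb u₂ S₂ hS₂))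
    (hx' : x' ∈ Finset.univ.image (cubeEmb u₁ S₁ hS₁) ∩
      Finset.univ.image (cubeEmb u₂' S₂ hS₂))
    (h : ∀ i ∈ S₁, i ∉ S₂ → u₂ i = u₂' i) :
    cubeEmb u₂ S₂ hS₂ = cubeEmb u₂' S₂ hS₂ := by
  simp only [Finset.mem_inter, mem_image_cubeEmb] at hx hx'
  refine (cubeEmb_eq_cubeEmb_iff hS₂ hS₂).2 ⟨rfl, fun i hi₂ => ?_⟩
  by_cases hi₁ : i ∈ S₁
  · exact h i hi₁ hi₂
  · rw [← hx.2 i hi₂, hx.1 i hi₁, ← hx'.1 i hi₁, hx'.2 i hi₂]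

lemma card_filter_one_lt_card_inter_le {φ₁ : (Fin N → Bool) → Fin n → Bool}
    (hφ₁ : φ₁ ∈ cubeEmbs N n) :
    #{φ₂ ∈ cubeEmbs N n | 1 < #(Finset.univ.image φ₁ ∩ Finset.univ.image φ₂)}
      ≤ N * (n - 1).choose (N - 1) * 2 ^ N := by
  obtain ⟨S₁, hS₁, u₁, rfl⟩ := mem_cubeEmbs.1 hφ₁
  calc _ ≤ #({S ∈ powersetCard N (Finset.univ : Finset (Fin n)) | ¬Disjoint S₁ S} ×ˢ
          (Finset.univ : Finset (S₁ → Bool))) := by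
        refine card_le_card_of_injOn
          (fun φ₂ => (freeCoords φ₂, fun i => φ₂ (fun _ => false) i)) ?_ ?_
        · intro φ₂ hφ₂
          obtain ⟨hφ₂, hmeet⟩ := mem_filter.1 hφ₂
          obtain ⟨S₂, hS₂, u₂, rfl⟩ := mem_cubeEmbs.1 hφ₂
          simp only [mem_coe, mem_product, Finset.mem_univ, and_true, mem_filter,
            mem_powersetCard, freeCoords_cubeEmb]
          exact ⟨⟨subset_univ _, hS₂⟩, fun hd =>
            (card_image_inter_image_cubeEmb_le_one hS₁ hS₂ hd).not_gt hmeet⟩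
        · intro φ₂ hφ₂ φ₂' hφ₂' h
          obtain ⟨hφ₂, hmeet⟩ := mem_filter.1 hφ₂
          obtain ⟨hφ₂', hmeet'⟩ := mem_filter.1 hφ₂'
          obtain ⟨S₂, hS₂, u₂, rfl⟩ := mem_cubeEmbs.1 hφ₂
          obtain ⟨S₂', hS₂', u₂', rfl⟩ := mem_cubeEmbs.1 hφ₂'
          obtain ⟨hS, hbase⟩ := Prod.mk.inj h
          simp only [freeCoords_cubeEmb] at hS
          subst hS
          obtain ⟨x, hx⟩ := card_pos.1 (zero_lt_one.trans hmeet)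
          obtain ⟨x', hx'⟩ := card_pos.1 (zero_lt_one.trans hmeet')
          refine cubeEmb_eq_of_meet hS₁ hS₂ hx hx' fun i hi₁ hi₂ => ?_
          have hi := congrFun hbase ⟨i, hi₁⟩
          simpa [cubeEmb_apply_of_notMem _ _ _ hi₂] using hi
    _ ≤ N * (n - 1).choose (N - 1) * 2 ^ N := by
        rw [card_product, card_univ, Fintype.card_fun, Fintype.card_bool, Fintype.card_coe, hS₁]
        gcongr
        simpa [hS₁] using card_filter_not_disjoint_powersetCard_le S₁ N

lemma interCountF_cubeEmbs_le :
    interCountF (cubeEmbs N n) ≤ #(cubeEmbs N n) * (N * (n - 1).choose (N - 1) * 2 ^ N) := by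
  unfold interCountF
  refine (Finset.card_le_card ?_).trans
    (card_filter_product_le fun _ hφ₁ => card_filter_one_lt_card_inter_le hφ₁)
  exact monotone_filter_right _ fun _ _ hp => hp.1

end Intersections

section Asymptotics

variable {N : ℕ}

lemma mul_two_pow_le_card_cubeEmbs (hN : 1 ≤ N) {n : ℕ} (hn : N ≤ n) :
    n * 2 ^ n ≤ #(cubeEmbs N n) * (N * 2 ^ N) :=
  calc n * 2 ^ n ≤ n * (n - 1).choose (N - 1) * 2 ^ n := by
        gcongr
        exact Nat.le_mul_of_pos_right n (Nat.choose_pos (by omega))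
    _ = #(cubeEmbs N n) * (N * 2 ^ N) := by
        rw [Nat.mul_choose_sub_one n hN, mul_right_comm, ← card_cubeEmbs_mul_two_pow]
        ring

lemma mul_interCountF_cubeEmbs_le (hN : 1 ≤ N) (n : ℕ) :
    2 ^ n * interCountF (cubeEmbs N n) * n ≤ N ^ 2 * 2 ^ (2 * N) * #(cubeEmbs N n) ^ 2 :=
  calc 2 ^ n * interCountF (cubeEmbs N n) * n
      ≤ 2 ^ n * (#(cubeEmbs N n) * (N * (n - 1).choose (N - 1) * 2 ^ N)) * n := by
        gcongr
        exact interCountF_cubeEmbs_le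
    _ = N * 2 ^ N * #(cubeEmbs N n) * (n * (n - 1).choose (N - 1)) * 2 ^ n := by ring
    _ = N * 2 ^ N * #(cubeEmbs N n) * N * (n.choose N * 2 ^ n) := by
        rw [Nat.mul_choose_sub_one n hN]
        ring
    _ = N ^ 2 * 2 ^ (2 * N) * #(cubeEmbs N n) ^ 2 := by
        rw [← card_cubeEmbs_mul_two_pow]
        ring

lemma tendsto_card_cubeEmbs_div_card_atTop (hN : 1 ≤ N) :
    Tendsto (fun n => (#(cubeEmbs N n) : ℝ) / (Fintype.card (Fin n → Bool) : ℝ))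
      atTop atTop := by
  have hlin : Tendsto (fun n : ℕ => (n : ℝ) / (N * 2 ^ N)) atTop atTop :=
    tendsto_natCast_atTop_atTop.atTop_div_const (by positivity)
  refine tendsto_atTop_mono' atTop ?_ hlin
  filter_upwards [eventually_ge_atTop N] with n hn
  rw [Fintype.card_fun, Fintype.card_bool, Fintype.card_fin,
    div_le_div_iff₀ (by positivity) (by positivity)]
  exact_mod_cast mul_two_pow_le_card_cubeEmbs hN hn

lemma tendsto_card_mul_interCountF_cubeEmbs_div (hN : 1 ≤ N) :
    Tendsto (fun n => ((Fintype.card (Fin n → Bool) : ℝ) * (interCountF (cubeEmbs N n) : ℝ)) /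
      (#(cubeEmbs N n) : ℝ) ^ 2) atTop (nhds 0) := by
  refine tendsto_of_tendsto_of_tendsto_of_le_of_le' tendsto_const_nhds
    (tendsto_const_div_atTop_nhds_zero_nat ((N ^ 2 * 2 ^ (2 * N) : ℕ) : ℝ))
    ?_ ?_
  · filter_upwards with n
    positivity
  · filter_upwards [eventually_ge_atTop N, eventually_ge_atTop 1] with n hn hn₁
    have hcard : 0 < #(cubeEmbs N n) := by
      refine pos_of_mul_pos_left (b := 2 ^ N) ?_ (Nat.zero_le _)
      rw [card_cubeEmbs_mul_two_pow]
      exact Nat.mul_pos (Nat.choose_pos hn) (Nat.two_pow_pos n)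
    rw [Fintype.card_fun, Fintype.card_bool, Fintype.card_fin,
      div_le_div_iff₀ (by positivity) (by positivity)]
    exact_mod_cast mul_interCountF_cubeEmbs_le hN n

end Asymptotics

/-- **Theorem (the hypercube is a good homogeneous ssee).**
Every `φ_{u,S}` is injective; `|Q_n| → ∞`; for every `N ≥ 1`,
`|binom(Q_n,Q_N)|/|Q_n| → ∞` and `|Q_n|·I(N,n)/|binom(Q_n,Q_N)|² → 0`; and for all
`N ≤ n` every `x ∈ Q_n` lies in the same strictly positive number of images
`φ(Q_N)`. -/
theorem hypercube_good_homogeneous_ssee :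
    (∀ (N n : ℕ), N ≤ n → ∀ (u : Fin n → Bool) (S : Finset (Fin n))
      (hS : S.card = N), Function.Injective (cubeEmb u S hS)) ∧
    Tendsto (fun n => Fintype.card (Fin n → Bool)) atTop atTop ∧
    (∀ N : ℕ, 1 ≤ N →
      Tendsto (fun n => ((cubeEmbs N n).card : ℝ) / (Fintype.card (Fin n → Bool) : ℝ))
        atTop atTop) ∧
    (∀ N : ℕ, 1 ≤ N →
      Tendsto (fun n =>
        ((Fintype.card (Fin n → Bool) : ℝ) * (interCountF (cubeEmbs N n) : ℝ)) /
          ((cubeEmbs N n).card : ℝ) ^ 2) atTop (nhds 0)) ∧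
    (∀ N n : ℕ, N ≤ n → ∃ m : ℕ, 0 < m ∧ ∀ x : Fin n → Bool,
      ((cubeEmbs N n).filter (fun φ => ∃ v, φ v = x)).card = m) := by
  refine ⟨fun N n _ u S hS => cubeEmb_injective u hS, ?_,
    fun N hN => tendsto_card_cubeEmbs_div_card_atTop hN,
    fun N hN => tendsto_card_mul_interCountF_cubeEmbs_div hN,
    fun N n hNn => ⟨n.choose N, Nat.choose_pos hNn, card_filter_mem_range_cubeEmbs⟩⟩
  simp only [Fintype.card_fun, Fintype.card_bool, Fintype.card_fin]
  exact tendsto_pow_atTop_atTop_of_one_lt one_lt_two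

end
end
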